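/- arXiv:1312.5030 — 2 statements merged into one kernel-verified Lean document; each statement's English description precedes it below -/
import Mathlib

section
/- Every subgroup of Q_{2^∞} isomorphic to the quaternion group Q_8 is conjugate in Q_{2^∞} to W = ⟨t_2, y⟩. -/
noncomputable section

open scoped Quaternion

/-- The embedding of the complex numbers in the real quaternions. -/
def cplxToQuat (z : ℂ) : ℍ[ℝ] := ⟨z.re, z.im, 0, 0⟩

lemma cplxToQuat_ne_zero (z : ℂ) (hz : z ≠ 0) : cplxToQuat z ≠ 0 := by
  intro h
  apply hz
  have h1 : (cplxToQuat z).re = 0 := by rw [h]; rfl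
  have h2 : (cplxToQuat z).imI = 0 := by rw [h]; rfl
  exact Complex.ext h1 h2

/-- The quaternion `j`, as a unit. -/
def jQuat : ℍ[ℝ]ˣ :=
  Units.mk0 (⟨0, 0, 1, 0⟩ : ℍ[ℝ])
    (fun h => one_ne_zero (α := ℝ) (by simpa using congrArg QuaternionAlgebra.imJ h))

/-- The primitive `2^n`-th root of unity `exp(2πi/2^n)`, viewed as a unit quaternion. -/
def zetaQuat (n : ℕ) : ℍ[ℝ]ˣ :=
  Units.mk0 (cplxToQuat (Complex.exp (2 * Real.pi * Complex.I / (2 ^ n))))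
    (cplxToQuat_ne_zero _ (Complex.exp_ne_zero _))

/-- The infinite quaternion 2-group `Q_{2^∞}`: the subgroup of the unit quaternions
generated by `j` together with all `2`-power complex roots of unity.  It is the
nonsplit extension of `ℤ/2` by the Prüfer 2-group in which `y = j` acts by inversion
and `y² = t₁ = -1`. -/
def QInf : Subgroup ℍ[ℝ]ˣ := Subgroup.closure ({jQuat} ∪ Set.range zetaQuat)

/-- The generator `y` (of order 4) of `Q_{2^∞}`. -/
def QInf.y : ↥QInf := ⟨jQuat, Subgroup.subset_closure (Set.mem_union_left _ rfl)⟩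

/-- The element `t_n` of order `2^n` in the maximal torus of `Q_{2^∞}`,
with `t_{n+1}² = t_n`. -/
def QInf.t (n : ℕ) : ↥QInf :=
  ⟨zetaQuat n, Subgroup.subset_closure (Set.mem_union_right _ ⟨n, rfl⟩)⟩

/-- The maximal torus `T = ℤ(2^∞)` of `Q_{2^∞}`. -/
def QInf.torus : Subgroup ↥QInf := Subgroup.closure (Set.range QInf.t)

/-!
Inside the unit quaternions, `Q_{2^∞}` is generated by the `2`-power roots of unity of `ℂ`
and by `y = j`, and `j z j⁻¹ = z̄ = z⁻¹` for such `z`. Hence every element is `s` or `s * y`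
with `s` in the abelian torus `T`, and since `T` is `2`-divisible, `s * y = r ^ 2 * y` is
conjugate to `y` by `r⁻¹`. A subgroup `W ≅ Q₈` is nonabelian, so it is not contained in `T`
and may be conjugated to contain `y`. Then `W` is determined by `W ∩ T`, which lies in the
`4`-torsion `{1, t₂, y², t₂⁻¹}` of `T`; it must contain `t₂`, since otherwise `W ≤ ⟨y⟩`
would be abelian. So `W = ⟨t₂, y⟩`.
-/

open scoped ComplexConjugate
open Complex

def cplxToQuatHom : ℂ →+* ℍ[ℝ] where
  toFun := cplxToQuat
  map_one' := by ext <;> simp [cplxToQuat]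
  map_mul' z w := by
    ext <;> simp only [Quaternion.re_mul, Quaternion.imI_mul, Quaternion.imJ_mul,
      Quaternion.imK_mul] <;> simp [cplxToQuat]
  map_zero' := by ext <;> simp [cplxToQuat]
  map_add' _ _ := by
    ext <;> simp only [Quaternion.re_add, Quaternion.imI_add, Quaternion.imJ_add,
      Quaternion.imK_add] <;> simp [cplxToQuat]

lemma cplxToQuatHom_injective : Function.Injective cplxToQuatHom := fun _ _ h =>
  Complex.ext (congrArg QuaternionAlgebra.re h) (congrArg QuaternionAlgebra.imI h)

lemma jQuat_val : (jQuat : ℍ[ℝ]) = ⟨0, 0, 1, 0⟩ := rfl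

lemma jQuat_mul_cplxToQuatHom (z : ℂ) :
    (jQuat : ℍ[ℝ]) * cplxToQuatHom z = cplxToQuatHom (conj z) * jQuat := by
  ext <;> simp only [Quaternion.re_mul, Quaternion.imI_mul, Quaternion.imJ_mul,
    Quaternion.imK_mul] <;> simp [cplxToQuatHom, cplxToQuat, jQuat_val]

lemma jQuat_sq : (jQuat : ℍ[ℝ]) ^ 2 = cplxToQuatHom (-1) := by
  ext <;> simp only [sq, Quaternion.re_mul, Quaternion.imI_mul, Quaternion.imJ_mul,
    Quaternion.imK_mul] <;> simp [cplxToQuatHom, cplxToQuat, jQuat_val]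

lemma Complex.exp_two_pi_I_div_two_pow_succ_sq (n : ℕ) :
    exp (2 * Real.pi * I / 2 ^ (n + 1)) ^ 2 = exp (2 * Real.pi * I / 2 ^ n) := by
  rw [← exp_nat_mul]
  congr 1
  field_simp
  ring

lemma Complex.conj_exp_two_pi_I_div_two_pow (n : ℕ) :
    conj (exp (2 * Real.pi * I / 2 ^ n)) = (exp (2 * Real.pi * I / 2 ^ n))⁻¹ := by
  rw [← exp_conj, ← exp_neg]
  congr 1
  simp only [map_div₀, map_mul, map_ofNat, conj_ofReal, conj_I, mul_neg, map_pow]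
  ring

lemma Complex.exp_two_pi_I_div_four : exp (2 * Real.pi * I / 2 ^ 2) = I := by
  have h : 2 * Real.pi * I / 2 ^ 2 = (Real.pi / 2 : ℝ) * I := by push_cast; ring
  rw [h, exp_mul_I, ← ofReal_cos, ← ofReal_sin, Real.cos_pi_div_two, Real.sin_pi_div_two]
  simp

lemma Complex.eq_of_pow_four_eq_one {z : ℂ} (h : z ^ 4 = 1) :
    z = 1 ∨ z = I ∨ z = -1 ∨ z = -I := by
  have : (z - 1) * (z - I) * (z + 1) * (z + I) = 0 := by
    linear_combination h - (z ^ 2 - 1) * I_sq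
  simp only [mul_eq_zero, sub_eq_zero, add_eq_zero_iff_eq_neg] at this
  tauto

lemma Subgroup.isMulCommutative_of_le {G : Type*} [Group G] {H K : Subgroup G} (hHK : H ≤ K)
    [IsMulCommutative K] : IsMulCommutative H :=
  .of_setLike_mul_comm fun _ ha _ hb => setLike_mul_comm (hHK ha) (hHK hb)

lemma MulEquiv.isMulCommutative {M N : Type*} [Mul M] [Mul N] (e : M ≃* N)
    [IsMulCommutative M] : IsMulCommutative N :=
  .of_comm fun a b => e.symm.injective <| by rw [map_mul, map_mul, mul_comm']

lemma QuaternionGroup.not_isMulCommutative {n : ℕ} (hn : n ≠ 1) :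
    ¬ IsMulCommutative (QuaternionGroup n) := by
  intro _
  have h := mul_comm' (a 1 : QuaternionGroup n) (xa 0)
  simp only [a_mul_xa, xa_mul_a, zero_sub, zero_add, xa.injEq] at h
  have h2 : ((2 : ℕ) : ZMod (2 * n)) = 0 := by push_cast; linear_combination -h
  rw [ZMod.natCast_eq_zero_iff] at h2
  exact hn (Nat.dvd_one.1 (Nat.dvd_of_mul_dvd_mul_left two_pos (by simpa using h2)))

namespace QInf

def toQuat : ↥QInf →* ℍ[ℝ] := (Units.coeHom ℍ[ℝ]).comp QInf.subtype

lemma toQuat_injective : Function.Injective toQuat := fun _ _ h => Subtype.ext (Units.ext h)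

lemma toQuat_t (n : ℕ) : toQuat (t n) = cplxToQuatHom (exp (2 * Real.pi * I / 2 ^ n)) := rfl

lemma toQuat_y : toQuat y = jQuat := rfl

lemma t_succ_sq (n : ℕ) : t (n + 1) ^ 2 = t n :=
  toQuat_injective <| by rw [map_pow, toQuat_t, toQuat_t, ← map_pow,
    exp_two_pi_I_div_two_pow_succ_sq]

lemma y_mul_t_mul_y_inv (n : ℕ) : y * t n * y⁻¹ = (t n)⁻¹ :=
  toQuat_injective <| by
    rw [map_mul, map_mul, map_inv, map_inv, toQuat_t, toQuat_y, jQuat_mul_cplxToQuatHom,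
      conj_exp_two_pi_I_div_two_pow, map_inv₀, mul_assoc, mul_inv_cancel₀ (Units.ne_zero _),
      mul_one]

lemma toQuat_t_two : toQuat (t 2) = cplxToQuatHom I := by
  rw [toQuat_t, exp_two_pi_I_div_four]

lemma toQuat_y_sq : toQuat (y ^ 2) = cplxToQuatHom (-1) := by
  rw [map_pow, toQuat_y, jQuat_sq]

lemma y_sq : y ^ 2 = t 1 :=
  toQuat_injective <| by rw [← t_succ_sq, toQuat_y_sq, map_pow, toQuat_t_two, ← map_pow, I_sq]


lemma zpowers_t_mono : Monotone fun n => Subgroup.zpowers (t n) :=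
  monotone_nat_of_le_succ fun n =>
    Subgroup.zpowers_le.2 (t_succ_sq n ▸ pow_mem (Subgroup.mem_zpowers _) 2)

lemma torus_eq_iSup_zpowers : torus = ⨆ n, Subgroup.zpowers (t n) := by
  simp_rw [torus, Subgroup.zpowers_eq_closure, ← Subgroup.closure_iUnion,
    Set.iUnion_singleton_eq_range]

lemma mem_torus_iff {s : ↥QInf} : s ∈ torus ↔ ∃ n, ∃ k : ℤ, t n ^ k = s := by
  simp [torus_eq_iSup_zpowers, Subgroup.mem_iSup_of_directed zpowers_t_mono.directed_le,
    Subgroup.mem_zpowers_iff]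

instance isMulCommutative_torus : IsMulCommutative torus := by
  rw [torus_eq_iSup_zpowers]
  exact Subgroup.isMulCommutative_iSup zpowers_t_mono.directed_le

lemma exists_sq_eq_of_mem_torus {s : ↥QInf} (hs : s ∈ torus) : ∃ r ∈ torus, r ^ 2 = s := by
  obtain ⟨n, k, rfl⟩ := mem_torus_iff.1 hs
  refine ⟨t (n + 1) ^ k, mem_torus_iff.2 ⟨n + 1, k, rfl⟩, ?_⟩
  rw [← zpow_natCast, ← zpow_mul, mul_comm, zpow_mul, zpow_natCast, t_succ_sq]

lemma y_mul_mul_y_inv_of_mem_torus {s : ↥QInf} (hs : s ∈ torus) : y * s * y⁻¹ = s⁻¹ := by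
  obtain ⟨n, k, rfl⟩ := mem_torus_iff.1 hs
  rw [← MulAut.conj_apply, map_zpow, MulAut.conj_apply, y_mul_t_mul_y_inv, inv_zpow]

lemma y_sq_mem_torus : y ^ 2 ∈ torus :=
  y_sq ▸ Subgroup.subset_closure (Set.mem_range_self 1)

lemma mem_torus_or_mul_y_inv_mem_torus (v : ↥QInf) : v ∈ torus ∨ v * y⁻¹ ∈ torus := by
  have hv : v ∈ Subgroup.closure
      (((↑) : ↥QInf → ℍ[ℝ]ˣ) ⁻¹' ({jQuat} ∪ Set.range zetaQuat)) := by
    convert Subgroup.mem_top v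
    exact Subgroup.closure_closure_coe_preimage
  induction hv using Subgroup.closure_induction with
  | mem x hx =>
    rcases hx with hx | ⟨n, hx⟩
    · right
      rw [show x = y from Subtype.ext hx, mul_inv_cancel]
      exact one_mem _
    · left
      rw [show x = t n from Subtype.ext hx.symm]
      exact Subgroup.subset_closure ⟨n, rfl⟩
  | one => exact .inl (one_mem _)
  | mul a b _ _ ha hb =>
    rcases ha with ha | ha <;> rcases hb with hb | hb
    · exact .inl (mul_mem ha hb)
    · exact .inr (by rw [mul_assoc]; exact mul_mem ha hb)
    · right
      rw [show a * b * y⁻¹ = a * y⁻¹ * (y * b * y⁻¹) by group,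
        y_mul_mul_y_inv_of_mem_torus hb]
      exact mul_mem ha (inv_mem hb)
    · left
      rw [show a * b = a * y⁻¹ * (y * (b * y⁻¹) * y⁻¹) * y ^ 2 by group,
        y_mul_mul_y_inv_of_mem_torus hb]
      exact mul_mem (mul_mem ha (inv_mem hb)) y_sq_mem_torus
  | inv a _ ha =>
    rcases ha with ha | ha
    · exact .inl (inv_mem ha)
    · right
      rw [show a⁻¹ * y⁻¹ = (y ^ 2)⁻¹ * (y * (a * y⁻¹)⁻¹ * y⁻¹) by group,
        y_mul_mul_y_inv_of_mem_torus (inv_mem ha)]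
      exact mul_mem (inv_mem y_sq_mem_torus) (inv_mem (inv_mem ha))

lemma eq_of_mem_torus_of_pow_four_eq_one {s : ↥QInf} (hs : s ∈ torus) (h4 : s ^ 4 = 1) :
    s = 1 ∨ s = t 2 ∨ s = y ^ 2 ∨ s = (t 2)⁻¹ := by
  obtain ⟨n, k, rfl⟩ := mem_torus_iff.1 hs
  set z := exp (2 * Real.pi * I / 2 ^ n) ^ k
  have hz : toQuat (t n ^ k) = cplxToQuatHom z := by rw [map_zpow, toQuat_t, map_zpow₀]
  have hz4 : z ^ 4 = 1 := cplxToQuatHom_injective <| by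
    rw [map_pow, ← hz, ← map_pow, h4, map_one, map_one]
  rcases Complex.eq_of_pow_four_eq_one hz4 with h | h | h | h <;> rw [h] at hz
  · exact .inl (toQuat_injective (by rw [hz, map_one, map_one]))
  · exact .inr (.inl (toQuat_injective (by rw [hz, toQuat_t_two])))
  · exact .inr (.inr (.inl (toQuat_injective (by rw [hz, toQuat_y_sq]))))
  · refine .inr (.inr (.inr (toQuat_injective ?_)))
    rw [hz, map_inv, toQuat_t_two, ← map_inv₀, inv_I]

lemma exists_conj_eq_y {w : ↥QInf} (hw : w ∉ torus) : ∃ g : ↥QInf, g * w * g⁻¹ = y := by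
  obtain ⟨r, hr, hrw⟩ :=
    exists_sq_eq_of_mem_torus ((mem_torus_or_mul_y_inv_mem_torus w).resolve_left hw)
  refine ⟨r⁻¹, ?_⟩
  calc r⁻¹ * w * r⁻¹⁻¹ = r⁻¹ * (w * y⁻¹) * (y * r * y⁻¹) * y := by group
    _ = y := by rw [← hrw, y_mul_mul_y_inv_of_mem_torus hr]; group

lemma le_of_inf_torus_le {W K : Subgroup ↥QInf} (hyW : y ∈ W) (hyK : y ∈ K)
    (h : W ⊓ torus ≤ K) : W ≤ K := fun v hv => by
  rcases mem_torus_or_mul_y_inv_mem_torus v with hv' | hv'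
  · exact h ⟨hv, hv'⟩
  · simpa using mul_mem (h (Subgroup.mem_inf.2 ⟨mul_mem hv (inv_mem hyW), hv'⟩)) hyK

variable {W : Subgroup ↥QInf}

lemma t_two_mem_of_not_isMulCommutative (hyW : y ∈ W) (hW4 : ∀ w ∈ W, w ^ 4 = 1)
    (hW : ¬ IsMulCommutative W) : t 2 ∈ W := by
  by_contra ht
  refine hW (Subgroup.isMulCommutative_of_le
    (le_of_inf_torus_le hyW (Subgroup.mem_zpowers y) ?_))
  rintro s ⟨hsW, hsT⟩
  rcases eq_of_mem_torus_of_pow_four_eq_one hsT (hW4 s hsW) with rfl | rfl | rfl | rfl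
  · exact one_mem _
  · exact absurd hsW ht
  · exact pow_mem (Subgroup.mem_zpowers y) 2
  · exact absurd (inv_inv (t 2) ▸ inv_mem hsW) ht

lemma eq_closure_t_two_y (hyW : y ∈ W) (hW4 : ∀ w ∈ W, w ^ 4 = 1)
    (hW : ¬ IsMulCommutative W) : W = Subgroup.closure {t 2, y} := by
  have ht : t 2 ∈ Subgroup.closure {t 2, y} := Subgroup.subset_closure (by simp)
  have hy : y ∈ Subgroup.closure {t 2, y} := Subgroup.subset_closure (by simp)
  refine le_antisymm (le_of_inf_torus_le hyW hy ?_) ?_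
  · rintro s ⟨hsW, hsT⟩
    rcases eq_of_mem_torus_of_pow_four_eq_one hsT (hW4 s hsW) with rfl | rfl | rfl | rfl
    · exact one_mem _
    · exact ht
    · exact pow_mem hy 2
    · exact inv_mem ht
  · rw [Subgroup.closure_le, Set.insert_subset_iff, Set.singleton_subset_iff]
    exact ⟨t_two_mem_of_not_isMulCommutative hyW hW4 hW, hyW⟩

end QInf

/-- Every subgroup of `Q_{2^∞}` isomorphic to the quaternion group `Q₈` is conjugate
in `Q_{2^∞}` to `W = ⟨t₂, y⟩`. -/
theorem QInf_Q8_subgroups_conjugate (W : Subgroup ↥QInf)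
    (hW : Nonempty (↥W ≃* QuaternionGroup 2)) :
    ∃ g : ↥QInf,
      Subgroup.map (MulAut.conj g).toMonoidHom W = Subgroup.closure {QInf.t 2, QInf.y} := by
  obtain ⟨e⟩ := hW
  have hW4 : ∀ w ∈ W, w ^ 4 = 1 := fun w hw => by
    have hexp : Monoid.exponent W = 4 := by
      rw [Monoid.exponent_eq_of_mulEquiv e, QuaternionGroup.exponent]; rfl
    simpa [hexp] using congrArg Subtype.val (Monoid.pow_exponent_eq_one (⟨w, hw⟩ : W))
  have hWnc : ¬ IsMulCommutative W := fun _ =>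
    QuaternionGroup.not_isMulCommutative (by norm_num) e.isMulCommutative
  obtain ⟨w, hwW, hwT⟩ : ∃ w ∈ W, w ∉ QInf.torus := by
    by_contra! h
    exact hWnc (Subgroup.isMulCommutative_of_le h)
  obtain ⟨g, hg⟩ := QInf.exists_conj_eq_y hwT
  refine ⟨g, QInf.eq_closure_t_two_y ⟨w, hwW, hg⟩ ?_ ?_⟩
  · rintro _ ⟨v, hv, rfl⟩
    rw [← map_pow, hW4 v hv, map_one]
  · intro _
    exact hWnc (W.equivMapOfInjective (MulAut.conj g).toMonoidHom
      (MulAut.conj g).injective).symm.isMulCommutative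

end
end

section
/- Every normal subgroup of GL_2(F_3) whose order is divisible by 3 contains SL_2(F_3). -/
open Matrix

namespace SL2F3Aux

abbrev G := GL (Fin 2) (ZMod 3)
abbrev SL := Matrix.SpecialLinearGroup (Fin 2) (ZMod 3)

def sT : SL := ⟨!![1,1;0,1], by decide⟩
def sT' : SL := ⟨!![1,0;1,1], by decide⟩
def sW : SL := ⟨!![0,1;2,0], by decide⟩
def sNeg : SL := ⟨!![2,0;0,2], by decide⟩

noncomputable def tg : G := Matrix.SpecialLinearGroup.toGL sT
noncomputable def tg' : G := Matrix.SpecialLinearGroup.toGL sT'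
noncomputable def wg : G := Matrix.SpecialLinearGroup.toGL sW
noncomputable def ng : G := Matrix.SpecialLinearGroup.toGL sNeg

lemma orderOf_tg : orderOf tg = 3 := by
  apply orderOf_eq_prime
  · apply Units.ext
    show ((tg : Matrix (Fin 2) (Fin 2) (ZMod 3))^3) = 1
    decide
  · intro h
    have : (tg : Matrix (Fin 2) (Fin 2) (ZMod 3)) = 1 := congrArg Units.val h
    revert this; decide

lemma card_G : Nat.card G = 48 := by
  rw [Matrix.card_GL_field]
  norm_num [Fin.prod_univ_two, ZMod.card]

lemma fact48 : (Nat.factorization 48) 3 = 1 := by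
  have hp : Nat.Prime 3 := by norm_num
  have h1 : 1 ≤ (Nat.factorization 48) 3 :=
    (Nat.Prime.pow_dvd_iff_le_factorization hp (by norm_num)).1 (by norm_num)
  have h2 : ¬ 2 ≤ (Nat.factorization 48) 3 := fun h =>
    absurd ((Nat.Prime.pow_dvd_iff_le_factorization hp (by norm_num)).2 h) (by norm_num)
  omega

lemma tg'_conj : tg' = wg * (tg * tg) * wg⁻¹ := by
  apply Units.ext
  show (tg' : Matrix (Fin 2) (Fin 2) (ZMod 3)) = ((wg * (tg * tg) * wg⁻¹ : G) : Matrix _ _ _)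
  decide

lemma ng_eq : ng = (tg * tg') ^ 2 := by
  apply Units.ext
  show (ng : Matrix (Fin 2) (Fin 2) (ZMod 3)) = (((tg * tg') ^ 2 : G) : Matrix _ _ _)
  decide

lemma trans_cases : ∀ (i j : Fin 2) (c : ZMod 3), i ≠ j → Matrix.transvection i j c = 1 ∨
    Matrix.transvection i j c = !![1,1;0,1] ∨
    Matrix.transvection i j c = !![1,1;0,1] * !![1,1;0,1] ∨
    Matrix.transvection i j c = !![1,0;1,1] ∨
    Matrix.transvection i j c = !![1,0;1,1] * !![1,0;1,1] := by decide

lemma diag_cases : ∀ D : Fin 2 → ZMod 3, (Matrix.diagonal D).det = 1 →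
    Matrix.diagonal D = 1 ∨ Matrix.diagonal D = !![2,0;0,2] := by decide

end SL2F3Aux

open SL2F3Aux in
/-- Every normal subgroup of `GL₂(𝔽₃)` whose order is divisible by 3 contains
`SL₂(𝔽₃)` (realized as the range of the canonical embedding `SL₂ → GL₂`). -/
theorem SL2_le_normal_of_three_dvd_card (H : Subgroup (GL (Fin 2) (ZMod 3)))
    (hH : H.Normal) (h3 : 3 ∣ Nat.card ↥H) :
    (Matrix.SpecialLinearGroup.toGL :
        Matrix.SpecialLinearGroup (Fin 2) (ZMod 3) →* GL (Fin 2) (ZMod 3)).range ≤ H := by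
  have hp : Fact (Nat.Prime 3) := ⟨by norm_num⟩
  -- Step 1: H contains an element of order 3
  obtain ⟨x, hx⟩ := exists_prime_orderOf_dvd_card' (G := ↥H) 3 h3
  have hxG : orderOf (x : G) = 3 := by rw [Subgroup.orderOf_coe]; exact hx
  -- Step 2: zpowers x and zpowers tg are Sylow 3-subgroups
  have hfact : (Nat.card G).factorization 3 = 1 := by rw [card_G]; exact fact48
  have cardP : Nat.card (Subgroup.zpowers (x : G)) = 3 ^ (Nat.card G).factorization 3 := by
    rw [hfact, pow_one, Nat.card_zpowers, hxG]
  have cardQ : Nat.card (Subgroup.zpowers tg) = 3 ^ (Nat.card G).factorization 3 := by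
    rw [hfact, pow_one, Nat.card_zpowers, orderOf_tg]
  let P : Sylow 3 G := Sylow.ofCard _ cardP
  let Q : Sylow 3 G := Sylow.ofCard _ cardQ
  -- Step 3: Sylow conjugacy puts tg into H
  obtain ⟨g, hg⟩ := MulAction.exists_smul_eq G P Q
  have htgQ : tg ∈ (Q : Subgroup G) := Subgroup.mem_zpowers tg
  rw [← hg] at htgQ
  have htgH : tg ∈ H := by
    rw [Sylow.smul_def] at htgQ
    obtain ⟨y, hyP, hy⟩ := (Subgroup.mem_smul_pointwise_iff_exists _ _ _).mp htgQ
    have hyH : y ∈ H := (Subgroup.zpowers_le.mpr x.2) hyP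
    have hconj : MulAut.conj g • y = g * y * g⁻¹ := rfl
    rw [← hy, hconj]
    exact hH.conj_mem y hyH g
  -- Step 4: H contains the normal closure of tg
  have hN : Subgroup.normalClosure {tg} ≤ H :=
    Subgroup.normalClosure_le_normal (by simpa using htgH)
  set N := Subgroup.normalClosure {tg} with hNdef
  have htgN : tg ∈ N := Subgroup.subset_normalClosure rfl
  have htg'N : tg' ∈ N := by
    rw [tg'_conj]
    exact Subgroup.normalClosure_normal.conj_mem _ (mul_mem htgN htgN) _
  have hngN : ng ∈ N := by rw [ng_eq]; exact pow_mem (mul_mem htgN htg'N) 2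
  -- Step 5: SL₂ is contained in the normal closure of tg, via transvections
  intro u hu
  obtain ⟨A, rfl⟩ := hu
  refine hN ?_
  have htrans : ∀ t : Matrix.TransvectionStruct (Fin 2) (ZMod 3),
      ∃ v : G, (v : Matrix (Fin 2) (Fin 2) (ZMod 3)) = t.toMatrix ∧ v ∈ N := by
    rintro ⟨i, j, hij, c⟩
    show ∃ v : G, (v : Matrix (Fin 2) (Fin 2) (ZMod 3)) = Matrix.transvection i j c ∧ v ∈ N
    rcases trans_cases i j c hij with h | h | h | h | h
    · exact ⟨1, by simp [h], one_mem N⟩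
    · exact ⟨tg, by rw [h]; rfl, htgN⟩
    · exact ⟨tg * tg, by rw [h]; rfl, mul_mem htgN htgN⟩
    · exact ⟨tg', by rw [h]; rfl, htg'N⟩
    · exact ⟨tg' * tg', by rw [h]; rfl, mul_mem htg'N htg'N⟩
  have hlist : ∀ L : List (Matrix.TransvectionStruct (Fin 2) (ZMod 3)),
      ∃ v : G, (v : Matrix (Fin 2) (Fin 2) (ZMod 3))
        = (L.map Matrix.TransvectionStruct.toMatrix).prod ∧ v ∈ N := by
    intro L
    induction L with
    | nil => exact ⟨1, by simp, one_mem N⟩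
    | cons t L ih =>
      obtain ⟨v, hv, hvN⟩ := ih
      obtain ⟨w, hw, hwN⟩ := htrans t
      exact ⟨w * v, by simp [Units.val_mul, hv, hw], mul_mem hwN hvN⟩
  have hdetL : ∀ L : List (Matrix.TransvectionStruct (Fin 2) (ZMod 3)),
      ((L.map Matrix.TransvectionStruct.toMatrix).prod).det = 1 := by
    intro L
    induction L with
    | nil => simp
    | cons t L ih => simp [Matrix.det_mul, ih, t.det]
  obtain ⟨L, L', D, hdecomp⟩ :=
    Matrix.Pivot.exists_list_transvec_mul_diagonal_mul_list_transvec
      (A : Matrix (Fin 2) (Fin 2) (ZMod 3))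
  have hdetD : (Matrix.diagonal D).det = 1 := by
    have hA1 : (A : Matrix (Fin 2) (Fin 2) (ZMod 3)).det = 1 := A.2
    rw [hdecomp, Matrix.det_mul, Matrix.det_mul, hdetL L, hdetL L', one_mul, mul_one] at hA1
    exact hA1
  obtain ⟨vD, hvD, hvDN⟩ :
      ∃ v : G, (v : Matrix (Fin 2) (Fin 2) (ZMod 3)) = Matrix.diagonal D ∧ v ∈ N := by
    rcases diag_cases D hdetD with h | h
    · exact ⟨1, by simp [h], one_mem N⟩
    · exact ⟨ng, by rw [h]; rfl, hngN⟩
  obtain ⟨vL, hvL, hvLN⟩ := hlist L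
  obtain ⟨vL', hvL', hvL'N⟩ := hlist L'
  have hfin : Matrix.SpecialLinearGroup.toGL A = vL * vD * vL' := by
    apply Units.ext
    show (A : Matrix (Fin 2) (Fin 2) (ZMod 3)) = _
    rw [Units.val_mul, Units.val_mul, hvL, hvD, hvL', hdecomp]
  rw [hfin]
  exact mul_mem (mul_mem hvLN hvDN) hvL'N
end
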